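/- If a permutation α of V = {1,...,n} has at most one fixed point and all its cycles of length at least 2 have length divisible by 4, then every cycle of the induced pair permutation α' on 2-element subsets of V has even length. -/

import Mathlib

set_option linter.unusedVariables false

/-- The position `p_{ij}` of the pair `{i,j}` (1-based labels `i<j` in `{1,...,n}`),
namely `(2n-i)(i-1)/2 + (j-i)`, expressed on `Sym2 (Fin n)` (vertex `a : Fin n`
carries the label `a+1`). -/
def pairIndex (n : Nat) (e : Sym2 (Fin n)) : Nat :=
  Sym2.lift ⟨fun a b =>
      (2 * n - (min a.val b.val + 1)) * (min a.val b.val) / 2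
        + (max a.val b.val - min a.val b.val),
    fun a b => by simp [min_comm, max_comm]⟩ e

open scoped Classical in
/-- The index `N(G) = Σ_{ij ∈ E(G)} 2^(λ - p_ij)` of a labelled graph, `λ = C(n,2)`. -/
noncomputable def graphIndex (n : Nat) (G : SimpleGraph (Fin n)) : Nat :=
  ∑ e ∈ G.edgeSet.toFinset, 2 ^ (n.choose 2 - pairIndex n e)

/-- The pair permutation `α'` induced on `Sym2 (Fin n)` by `α'{i,j} = {αi,αj}`. -/
def pairPerm {n : Nat} (α : Equiv.Perm (Fin n)) : Equiv.Perm (Sym2 (Fin n)) where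
  toFun := Sym2.map α
  invFun := Sym2.map α.symm
  left_inv e := by induction e using Sym2.ind with | _ a b => simp
  right_inv e := by induction e using Sym2.ind with | _ a b => simp

/-- The relabelled graph `αG`, whose edge set is `{{αi,αj} : {i,j} ∈ E(G)}`. -/
def mapGraph {n : Nat} (α : Equiv.Perm (Fin n)) (G : SimpleGraph (Fin n)) :
    SimpleGraph (Fin n) where
  Adj a b := G.Adj (α.symm a) (α.symm b)
  symm := ⟨fun a b h => G.symm.symm _ _ h⟩
  loopless := ⟨fun a h => G.loopless.irrefl _ h⟩

/-!
A power `α'^k` fixes a pair `{a, b}` either by fixing `a` and `b`, or by swapping them, in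
which case `α^(2k)` fixes `a`. Since `a ≠ b` and `α` has at most one fixed point, in both cases
some non-fixed point `x` satisfies `α^m x = x` with `m = k` or `m = 2k`, so the length of the
cycle of `x`, a multiple of `4`, divides `m`; hence `k` is even. Every period of `{a, b}` under
`α'` being even, so is the length of its cycle.
-/

open Finset

namespace Equiv.Perm

variable {α : Type*} [Fintype α] [DecidableEq α] {σ : Perm α} {x : α}

theorem card_support_cycleOf_dvd_of_pow_apply_eq (hx : σ x ≠ x) {k : ℕ}
    (h : (σ ^ k) x = x) : #(σ.cycleOf x).support ∣ k := by
  have hc := σ.isCycle_cycleOf hx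
  rw [← hc.orderOf]
  refine orderOf_dvd_of_pow_eq_one (hc.pow_eq_one_iff.2 ⟨x, ?_, ?_⟩)
  · rwa [cycleOf_apply_self]
  · rwa [cycleOf_pow_apply_self]

theorem natCard_sameCycle_eq_card_support_cycleOf (hx : σ x ≠ x) :
    Nat.card {y // σ.SameCycle x y} = #(σ.cycleOf x).support := by
  have hmem : x ∈ σ.support := mem_support.2 hx
  rw [← Fintype.card_coe, ← Nat.card_eq_fintype_card]
  exact Nat.card_congr <| Equiv.subtypeEquivRight fun y => by
    simp only [mem_support_cycleOf_iff, hmem, and_true]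

theorem two_dvd_natCard_sameCycle (h : ∀ k, (σ ^ k) x = x → 2 ∣ k) :
    2 ∣ Nat.card {y // σ.SameCycle x y} := by
  have hx : σ x ≠ x := fun hx => by simpa using h 1 (by simpa using hx)
  rw [natCard_sameCycle_eq_card_support_cycleOf hx]
  exact h _ <| by
    simpa using (pow_mod_card_support_cycleOf_self_apply σ #(σ.cycleOf x).support x).symm

end Equiv.Perm

open Equiv Perm

theorem pairPerm_pow_apply {n : ℕ} (α : Perm (Fin n)) (k : ℕ) (e : Sym2 (Fin n)) :
    (pairPerm α ^ k) e = Sym2.map (α ^ k) e := by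
  induction k with
  | zero => simp
  | succ k ih =>
    rw [pow_succ', mul_apply, ih, pow_succ']
    exact Sym2.map_map _

theorem two_dvd_of_pow_pairPerm_apply_eq {n : ℕ} {α : Perm (Fin n)}
    (hfix : {x : Fin n | α x = x}.Subsingleton)
    (hcyc : ∀ x : Fin n, α x ≠ x → 4 ∣ (α.cycleOf x).support.card)
    {e : Sym2 (Fin n)} (he : ¬ e.IsDiag) {k : ℕ} (h : (pairPerm α ^ k) e = e) : 2 ∣ k := by
  have four_dvd {x : Fin n} (hx : α x ≠ x) {m : ℕ} (hm : (α ^ m) x = x) : 4 ∣ m :=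
    (hcyc x hx).trans (card_support_cycleOf_dvd_of_pow_apply_eq hx hm)
  induction e using Sym2.ind with
  | _ a b =>
    rw [Sym2.mk_isDiag_iff] at he
    rw [pairPerm_pow_apply, Sym2.map_mk, Sym2.eq_iff] at h
    rcases h with ⟨ha, hb⟩ | ⟨hab, hba⟩
    · have hmoved : α a ≠ a ∨ α b ≠ b := by
        by_contra! hfixed
        exact he (hfix hfixed.1 hfixed.2)
      rcases hmoved with hx | hx
      · exact dvd_trans (by norm_num) (four_dvd hx ha)
      · exact dvd_trans (by norm_num) (four_dvd hx hb)
    · have hx : α a ≠ a := fun hx => he <| by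
        rw [← hab, pow_apply_eq_self_of_apply_eq_self hx]
      have h2k : (α ^ (2 * k)) a = a := by
        rw [two_mul, pow_add, mul_apply, hab, hba]
      have := four_dvd hx h2k
      omega

/-- If `α` has at most one fixed point and all its cycles of length `≥ 2` have
length divisible by `4`, then every cycle of the induced pair permutation `α'`
on 2-element subsets has even length (the length of the cycle of `e` being the size
of its orbit under `α'`). -/
theorem stmt12 (n : Nat) (α : Equiv.Perm (Fin n))
    (hfix : {x : Fin n | α x = x}.Subsingleton)
    (hcyc : ∀ x : Fin n, α x ≠ x → 4 ∣ (α.cycleOf x).support.card) :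
    ∀ e : Sym2 (Fin n), ¬ e.IsDiag →
      2 ∣ Nat.card {f : Sym2 (Fin n) // (pairPerm α).SameCycle e f} :=
  fun _ he => two_dvd_natCard_sameCycle fun _ =>
    two_dvd_of_pow_pairPerm_apply_eq hfix hcyc he
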